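/- arXiv:1708.06657 — 2 statements merged into one kernel-verified Lean document; each statement's English description precedes it below -/
import Mathlib

section
/- Let Φ : ℝ^d → [0,∞) be an N_∞ function and let L : [0,T]×ℝ^d×ℝ^d → ℝ be measurable in t for each (x,y), continuously differentiable in (x,y) for a.e. t, and satisfy the structure condition (S) with constants λ, Λ > 0. Then the action integral I(u) = ∫_0^T L(t,u(t),u'(t)) dt is Gâteaux differentiable at every u ∈ W^1L^Φ([0,T],ℝ^d) with d(u', L^∞) < Λ: for every v ∈ W^1L^Φ the map s ↦ I(u + sv) is finite for |s| small and differentiable at s = 0, with derivative ∫_0^T [∇_xL(t,u(t),u'(t))·v(t) + ∇_yL(t,u(t),u'(t))·v'(t)] dt, and this expression defines a bounded linear functional of v on W^1L^Φ. -/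
open MeasureTheory Filter Set
open scoped ENNReal RealInnerProductSpace Topology

noncomputable section

/-- `ℝ^d` with the euclidean norm. -/
abbrev Ed (d : ℕ) : Type := EuclideanSpace ℝ (Fin d)

/-- `Φ` is an `N_∞` function: differentiable, convex, nonnegative, vanishing exactly at `0`,
even, and superlinear at infinity. -/
def IsNInf {m : ℕ} (Φ : Ed m → ℝ) : Prop :=
  Differentiable ℝ Φ ∧ ConvexOn ℝ Set.univ Φ ∧ (∀ y, 0 ≤ Φ y) ∧ Φ 0 = 0 ∧
    (∀ y, y ≠ 0 → 0 < Φ y) ∧ (∀ y, Φ (-y) = Φ y) ∧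
    Tendsto (fun y => Φ y / ‖y‖) (comap (fun y : Ed m => ‖y‖) atTop) atTop

variable {d : ℕ}

/-- The modular `ρ_Φ(u) = ∫_0^T Φ(u(t)) dt`, as an extended nonnegative real. -/
def rhoE (T : ℝ) (Φ : Ed d → ℝ) (u : ℝ → Ed d) : ℝ≥0∞ :=
  ∫⁻ t in Icc (0:ℝ) T, ENNReal.ofReal (Φ (u t))

/-- `u ∈ L^Φ([0,T], ℝ^d)`. -/
def MemLphi (T : ℝ) (Φ : Ed d → ℝ) (u : ℝ → Ed d) : Prop :=
  AEMeasurable u (volume.restrict (Icc (0:ℝ) T)) ∧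
    ∃ l : ℝ, 0 < l ∧ rhoE T Φ (fun t => l • u t) < ⊤

/-- The Luxemburg norm of `u` on `[0,T]`. -/
def luxNorm (T : ℝ) (Φ : Ed d → ℝ) (u : ℝ → Ed d) : ℝ :=
  sInf {l : ℝ | 0 < l ∧ rhoE T Φ (fun t => l⁻¹ • u t) ≤ 1}

/-- `u ∈ W^1L^Φ([0,T], ℝ^d)` with a.e. derivative `u'` : `u` is absolutely continuous,
being the integral of the (integrable) function `u'`, and `u' ∈ L^Φ`. -/
def MemW1Lphi (T : ℝ) (Φ : Ed d → ℝ) (u u' : ℝ → Ed d) : Prop :=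
  IntegrableOn u' (Icc (0:ℝ) T) ∧ MemLphi T Φ u' ∧
    ∀ t ∈ Icc (0:ℝ) T, u t = u 0 + ∫ s in (0:ℝ)..t, u' s

/-- The complementary (conjugate) function `Φ*(ζ) = sup_y (y⬝ζ - Φ(y))`. -/
def conjFn (Φ : Ed d → ℝ) (z : Ed d) : ℝ := ⨆ y : Ed d, (⟪y, z⟫ - Φ y)

/-- The Luxemburg distance from `u` to `L^∞([0,T],ℝ^d)`. -/
def distLinf (T : ℝ) (Φ : Ed d → ℝ) (u : ℝ → Ed d) : ℝ :=
  sInf {r : ℝ | ∃ v : ℝ → Ed d, Measurable v ∧ (∃ C : ℝ, ∀ t, ‖v t‖ ≤ C) ∧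
    r = luxNorm T Φ (fun t => u t - v t)}

/-- The Lagrangian `L` is measurable in `t` for each `(x,y)` and continuously
differentiable in `(x,y)` for a.e. `t`. -/
def CaraL (T : ℝ) (L : ℝ → Ed d → Ed d → ℝ) : Prop :=
  (∀ x y, Measurable fun t => L t x y) ∧
    ∀ᵐ t ∂(volume.restrict (Icc (0:ℝ) T)), ContDiff ℝ 1 fun p : Ed d × Ed d => L t p.1 p.2

/-- The structure condition (S). -/
def CondS (T : ℝ) (Φ : Ed d → ℝ) (L : ℝ → Ed d → Ed d → ℝ) (lam Lam : ℝ) : Prop :=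
  ∃ a : Ed d → ℝ, ∃ b : ℝ → ℝ, Continuous a ∧ (∀ x, 0 ≤ a x) ∧
    IntegrableOn b (Icc (0:ℝ) T) ∧ (∀ t, 0 ≤ b t) ∧
    ∀ᵐ t ∂(volume.restrict (Icc (0:ℝ) T)), ∀ x y,
      |L t x y| + ‖gradient (fun x' => L t x' y) x‖ +
          conjFn Φ (lam⁻¹ • gradient (fun y' => L t x y') y) ≤
        a x * (b t + Φ (Lam⁻¹ • y))

/-!
The derivative is taken under the integral sign, so everything rests on an integrable bound,
uniform for small `|s|`, on `L(t, u + s v, u' + s v')` and its `s`-derivative. Since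
`d(u', L^∞) < Λ`, there are a bounded `v₀` and `ℓ < Λ` with `ρ_Φ((u' - v₀)/ℓ) ≤ 1`; writing
`(u' + s v')/Λ` as a convex combination of `(u' - v₀)/ℓ`, a bounded function and a small multiple
of `v'` makes `Φ((u' + s v')/Λ)` integrably dominated, and (S) turns this into bounds on `|L|`,
`|∇ₓL|` and `Φ*(∇_yL/λ)`. Young's inequality `y⬝ζ ≤ Φ(y) + Φ*(ζ)` then controls `∇_yL⬝v'`.
The same estimates at `s = 0`, with the Orlicz–Hölder inequality, `L^Φ ⊂ L¹` and
`sup |v| ≤ T⁻¹‖v‖₁ + ‖v'‖₁`, bound the derivative by the `W¹L^Φ` norm of `v`. Measurability of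
the integrands comes from a jointly measurable modification of the Carathéodory Lagrangian.
-/

namespace IsNInf

variable {Φ : Ed d → ℝ}

lemma continuous (hΦ : IsNInf Φ) : Continuous Φ := hΦ.1.continuous

lemma convexOn (hΦ : IsNInf Φ) : ConvexOn ℝ univ Φ := hΦ.2.1

lemma nonneg (hΦ : IsNInf Φ) (y : Ed d) : 0 ≤ Φ y := hΦ.2.2.1 y

lemma map_zero (hΦ : IsNInf Φ) : Φ 0 = 0 := hΦ.2.2.2.1

lemma map_neg (hΦ : IsNInf Φ) (y : Ed d) : Φ (-y) = Φ y := hΦ.2.2.2.2.2.1 y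

lemma exists_mul_norm_le (hΦ : IsNInf Φ) (C : ℝ) :
    ∃ R, ∀ y : Ed d, R ≤ ‖y‖ → C * ‖y‖ ≤ Φ y := by
  obtain ⟨R, hR⟩ := eventually_atTop.1 <| eventually_comap.1 <|
    hΦ.2.2.2.2.2.2.eventually (eventually_ge_atTop C)
  refine ⟨max R 1, fun y hy => ?_⟩
  have hy0 : 0 < ‖y‖ := one_pos.trans_le ((le_max_right R 1).trans hy)
  have := hR ‖y‖ ((le_max_left R 1).trans hy) y rfl
  rwa [le_div_iff₀ hy0] at this

lemma exists_inner_sub_le (hΦ : IsNInf Φ) (r : ℝ) :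
    ∃ M, 0 ≤ M ∧ ∀ z : Ed d, ‖z‖ ≤ r → ∀ y, ⟪y, z⟫ - Φ y ≤ M := by
  obtain ⟨R, hR⟩ := hΦ.exists_mul_norm_le r
  refine ⟨max R 0 * max r 0, by positivity, fun z hz y => ?_⟩
  have hyz : ⟪y, z⟫ ≤ ‖y‖ * r :=
    (real_inner_le_norm y z).trans (mul_le_mul_of_nonneg_left hz (norm_nonneg y))
  rcases le_or_gt R ‖y‖ with hy | hy
  · have := hR y hy
    have : 0 ≤ max R 0 * max r 0 := by positivity
    linarith
  · have := hΦ.nonneg y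
    have : ‖y‖ * r ≤ max R 0 * max r 0 :=
      mul_le_mul (hy.le.trans (le_max_left R 0)) (le_max_left r 0) ((norm_nonneg z).trans hz)
        (le_max_right R 0)
    linarith

lemma bddAbove_range_inner_sub (hΦ : IsNInf Φ) (z : Ed d) :
    BddAbove (range fun y => ⟪y, z⟫ - Φ y) := by
  obtain ⟨M, -, hM⟩ := hΦ.exists_inner_sub_le ‖z‖
  exact ⟨M, forall_mem_range.2 (hM z le_rfl)⟩

lemma inner_le_add_conjFn (hΦ : IsNInf Φ) (y z : Ed d) : ⟪y, z⟫ ≤ Φ y + conjFn Φ z := by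
  have := le_ciSup (hΦ.bddAbove_range_inner_sub z) y
  rw [conjFn]
  linarith

lemma abs_inner_le_add_conjFn (hΦ : IsNInf Φ) (y z : Ed d) :
    |⟪y, z⟫| ≤ Φ y + conjFn Φ z := by
  have h := hΦ.inner_le_add_conjFn (-y) z
  rw [hΦ.map_neg, inner_neg_left] at h
  exact abs_le.2 ⟨by linarith, hΦ.inner_le_add_conjFn y z⟩

lemma conjFn_nonneg (hΦ : IsNInf Φ) (z : Ed d) : 0 ≤ conjFn Φ z := by
  simpa [hΦ.map_zero] using hΦ.inner_le_add_conjFn 0 z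

lemma abs_inner_le_div_mul (hΦ : IsNInf Φ) {lam l : ℝ} (hlam : 0 < lam) (hl : 0 < l)
    (g y : Ed d) : |⟪g, y⟫| ≤ lam / l * (Φ (l • y) + conjFn Φ (lam⁻¹ • g)) := by
  have hg : ⟪g, y⟫ = lam / l * ⟪l • y, lam⁻¹ • g⟫ := by
    rw [real_inner_smul_left, real_inner_smul_right, real_inner_comm]
    field_simp
  rw [hg, abs_mul, abs_of_pos (div_pos hlam hl)]
  exact mul_le_mul_of_nonneg_left (hΦ.abs_inner_le_add_conjFn _ _) (div_pos hlam hl).le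

lemma abs_inner_add_inner_le (hΦ : IsNInf Φ) {lam : ℝ} (hlam : 0 < lam) {l : ℝ} (hl : 0 < l)
    {gx gy v v' : Ed d} {e M : ℝ} (hgx : ‖gx‖ ≤ e) (hgy : conjFn Φ (lam⁻¹ • gy) ≤ e)
    (hv : ‖v‖ ≤ M) : |⟪gx, v⟫ + ⟪gy, v'⟫| ≤ e * M + lam / l * (Φ (l • v') + e) := by
  refine (abs_add_le _ _).trans (add_le_add ?_ ((hΦ.abs_inner_le_div_mul hlam hl _ _).trans ?_))
  · exact (abs_real_inner_le_norm _ _).trans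
      (mul_le_mul hgx hv (norm_nonneg _) ((norm_nonneg _).trans hgx))
  · gcongr

lemma exists_conjFn_le (hΦ : IsNInf Φ) :
    ∃ M, 0 ≤ M ∧ ∀ z : Ed d, ‖z‖ ≤ 1 → conjFn Φ z ≤ M := by
  obtain ⟨M, hM0, hM⟩ := hΦ.exists_inner_sub_le 1
  exact ⟨M, hM0, fun z hz => ciSup_le (hM z hz)⟩

lemma norm_le_add_of_conjFn_le (hΦ : IsNInf Φ) {M : ℝ}
    (hM : ∀ z : Ed d, ‖z‖ ≤ 1 → conjFn Φ z ≤ M) (w : Ed d) : ‖w‖ ≤ Φ w + M := by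
  rcases eq_or_ne w 0 with rfl | hw
  · simpa [hΦ.map_zero] using (hΦ.conjFn_nonneg 0).trans (hM 0 (by simp))
  have hw0 : 0 < ‖w‖ := norm_pos_iff.2 hw
  have h1 : ⟪w, ‖w‖⁻¹ • w⟫ = ‖w‖ := by
    rw [real_inner_smul_right, real_inner_self_eq_norm_sq]
    field_simp
  have h2 := hM (‖w‖⁻¹ • w) (by rw [norm_smul, norm_inv, norm_norm, inv_mul_cancel₀ hw0.ne'])
  linarith [h1 ▸ hΦ.inner_le_add_conjFn w (‖w‖⁻¹ • w)]

lemma map_smul_le (hΦ : IsNInf Φ) {c : ℝ} (hc0 : 0 ≤ c) (hc1 : c ≤ 1) (y : Ed d) :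
    Φ (c • y) ≤ c * Φ y := by
  simpa [hΦ.map_zero] using
    hΦ.convexOn.2 (mem_univ y) (mem_univ 0) hc0 (sub_nonneg.2 hc1) (add_sub_cancel c 1)

/-- By evenness, `s • y` is a convex combination of `ε • y` and `-(ε • y)`. -/
lemma map_smul_le_of_abs_le (hΦ : IsNInf Φ) {s ε : ℝ} (hs : |s| ≤ ε) (y : Ed d) :
    Φ (s • y) ≤ Φ (ε • y) := by
  obtain ⟨hs₁, hs₂⟩ := abs_le.1 hs
  rcases (abs_nonneg s).trans hs |>.eq_or_lt with rfl | hε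
  · simp [abs_nonpos_iff.1 hs]
  set θ := (s + ε) / (2 * ε)
  have hθ : θ * (2 * ε) = s + ε := div_mul_cancel₀ _ (by positivity)
  have hθ0 : 0 ≤ θ := div_nonneg (by linarith) (by linarith)
  have hθ1 : θ ≤ 1 := (div_le_one (by linarith)).2 (by linarith)
  have hs : s • y = θ • (ε • y) + (1 - θ) • (-(ε • y)) := by
    rw [smul_neg, smul_smul, smul_smul, ← sub_eq_add_neg, ← sub_smul]
    congr 1
    linear_combination -hθ
  calc Φ (s • y) ≤ θ * Φ (ε • y) + (1 - θ) * Φ (-(ε • y)) :=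
        hs ▸ hΦ.convexOn.2 (mem_univ _) (mem_univ _) hθ0 (by linarith) (by ring)
    _ = Φ (ε • y) := by rw [hΦ.map_neg]; ring

lemma map_add_add_le (hΦ : IsNInf Φ) {α β : ℝ} (hα : 0 ≤ α) (hβ : 0 ≤ β)
    (hαβ : α + 2 * β = 1) (x y z : Ed d) :
    Φ (α • x + β • y + β • z) ≤ α * Φ x + β * Φ y + β * Φ z := by
  have hxyz : α • x + β • y + β • z = α • x + (2 * β) • ((1 / 2 : ℝ) • y + (1 / 2 : ℝ) • z) := by
    rw [smul_add, smul_smul, smul_smul, add_assoc]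
    congr 3 <;> ring
  have hyz := hΦ.convexOn.2 (mem_univ y) (mem_univ z) (by norm_num : (0:ℝ) ≤ 1 / 2)
    (by norm_num : (0:ℝ) ≤ 1 / 2) (by norm_num)
  have hx := hΦ.convexOn.2 (mem_univ x) (mem_univ ((1 / 2 : ℝ) • y + (1 / 2 : ℝ) • z)) hα
    (by positivity) hαβ
  rw [smul_eq_mul, smul_eq_mul] at hyz hx
  rw [hxyz]
  nlinarith

end IsNInf

section Modular

variable {T : ℝ} {Φ : Ed d → ℝ}

/-- The admissible scales in the Luxemburg norm: `luxNorm T Φ u = sInf (luxSet T Φ u)`. -/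
def luxSet (T : ℝ) (Φ : Ed d → ℝ) (u : ℝ → Ed d) : Set ℝ :=
  {l | 0 < l ∧ rhoE T Φ (fun t => l⁻¹ • u t) ≤ 1}

lemma bddBelow_luxSet (u : ℝ → Ed d) : BddBelow (luxSet T Φ u) := ⟨0, fun _ hl => hl.1.le⟩

lemma luxNorm_nonneg (u : ℝ → Ed d) : 0 ≤ luxNorm T Φ u :=
  Real.sInf_nonneg fun _ hl => hl.1.le

lemma exists_mem_luxSet_lt {u : ℝ → Ed d} (hne : (luxSet T Φ u).Nonempty) {r : ℝ}
    (h : luxNorm T Φ u < r) : ∃ k ∈ luxSet T Φ u, k < r :=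
  (csInf_lt_iff (bddBelow_luxSet u) hne).1 h

lemma le_mul_luxNorm {u : ℝ → Ed d} (hne : (luxSet T Φ u).Nonempty) {c X : ℝ} (hc : 0 ≤ c)
    (h : ∀ k ∈ luxSet T Φ u, X ≤ c * k) : X ≤ c * luxNorm T Φ u := by
  rcases hc.eq_or_lt with rfl | hc
  · obtain ⟨k, hk⟩ := hne
    simpa using h k hk
  rw [← div_le_iff₀' hc]
  exact le_csInf hne fun k hk => (div_le_iff₀' hc).2 (h k hk)

lemma IsNInf.integrableOn_comp (hΦ : IsNInf Φ) {g : ℝ → Ed d}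
    (hg : AEMeasurable g (volume.restrict (Icc 0 T))) (hfin : rhoE T Φ g < ⊤) :
    IntegrableOn (fun t => Φ (g t)) (Icc 0 T) :=
  ⟨(hΦ.continuous.measurable.comp_aemeasurable hg).aestronglyMeasurable,
    (hasFiniteIntegral_iff_ofReal (.of_forall fun _ => hΦ.nonneg _)).2 hfin⟩

lemma IsNInf.integral_comp_le_one (hΦ : IsNInf Φ) {g : ℝ → Ed d}
    (hg : AEMeasurable g (volume.restrict (Icc 0 T))) (h1 : rhoE T Φ g ≤ 1) :
    ∫ t in Icc 0 T, Φ (g t) ≤ 1 := by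
  rw [integral_eq_lintegral_of_nonneg_ae (.of_forall fun _ => hΦ.nonneg _)
    (hΦ.continuous.measurable.comp_aemeasurable hg).aestronglyMeasurable]
  exact ENNReal.toReal_le_of_le_ofReal zero_le_one (by simpa [rhoE] using h1)

lemma IsNInf.rhoE_smul_le (hΦ : IsNInf Φ) {c : ℝ} (hc0 : 0 ≤ c) (hc1 : c ≤ 1)
    (g : ℝ → Ed d) : rhoE T Φ (fun t => c • g t) ≤ ENNReal.ofReal c * rhoE T Φ g := by
  rw [rhoE, rhoE, ← lintegral_const_mul' _ _ ENNReal.ofReal_ne_top]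
  refine lintegral_mono fun t => ?_
  rw [← ENNReal.ofReal_mul hc0]
  exact ENNReal.ofReal_le_ofReal (hΦ.map_smul_le hc0 hc1 _)

/-- The witness is `k = (1 + ρ(l g)) / l`, for which convexity gives
`ρ(g / k) ≤ ρ(l g) / (1 + ρ(l g))`. -/
lemma IsNInf.luxSet_nonempty (hΦ : IsNInf Φ) {g : ℝ → Ed d} {l : ℝ} (hl : 0 < l)
    (hfin : rhoE T Φ (fun t => l • g t) < ⊤) : (luxSet T Φ g).Nonempty := by
  set r := (rhoE T Φ (fun t => l • g t)).toReal
  have hr : 0 ≤ r := ENNReal.toReal_nonneg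
  refine ⟨l⁻¹ * (1 + r), by positivity, ?_⟩
  have hg : (fun t => (l⁻¹ * (1 + r))⁻¹ • g t) = fun t => (1 + r)⁻¹ • (l • g t) := by
    funext t
    rw [smul_smul, mul_inv, inv_inv, mul_comm]
  rw [hg]
  calc rhoE T Φ (fun t => (1 + r)⁻¹ • (l • g t))
      ≤ ENNReal.ofReal (1 + r)⁻¹ * rhoE T Φ (fun t => l • g t) :=
        hΦ.rhoE_smul_le (by positivity) (inv_le_one_of_one_le₀ (by linarith)) _
    _ = ENNReal.ofReal ((1 + r)⁻¹ * r) := by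
        rw [ENNReal.ofReal_mul (by positivity), ENNReal.ofReal_toReal hfin.ne]
    _ ≤ 1 := by
        rw [ENNReal.ofReal_le_one, inv_mul_le_iff₀ (by positivity)]
        linarith

lemma IsNInf.rhoE_lt_top_of_norm_le (hΦ : IsNInf Φ) {g : ℝ → Ed d} {M : ℝ}
    (hM : ∀ t ∈ Icc 0 T, ‖g t‖ ≤ M) : rhoE T Φ g < ⊤ := by
  obtain ⟨K, hK⟩ := (isCompact_closedBall (0 : Ed d) M).bddAbove_image hΦ.continuous.continuousOn
  have hbound : ∀ᵐ t ∂(volume.restrict (Icc 0 T)), ENNReal.ofReal (Φ (g t)) ≤ ENNReal.ofReal K := by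
    filter_upwards [ae_restrict_mem measurableSet_Icc] with t ht
    exact ENNReal.ofReal_le_ofReal (hK ⟨g t, by simpa using hM t ht, rfl⟩)
  refine (lintegral_mono_ae hbound).trans_lt ?_
  rw [lintegral_const, Measure.restrict_apply_univ, Real.volume_Icc]
  exact ENNReal.mul_lt_top ENNReal.ofReal_lt_top ENNReal.ofReal_lt_top

lemma IsNInf.rhoE_midpoint_le (hΦ : IsNInf Φ) {f : ℝ → Ed d}
    (hf : AEMeasurable f (volume.restrict (Icc 0 T))) (g : ℝ → Ed d) :
    rhoE T Φ (fun t => (1 / 2 : ℝ) • (f t + g t)) ≤ rhoE T Φ f + rhoE T Φ g := by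
  have hΦf : AEMeasurable (fun t => ENNReal.ofReal (Φ (f t))) (volume.restrict (Icc 0 T)) :=
    (hΦ.continuous.measurable.comp_aemeasurable hf).ennreal_ofReal
  rw [rhoE, rhoE, rhoE, ← lintegral_add_left' hΦf]
  refine lintegral_mono fun t => ?_
  rw [← ENNReal.ofReal_add (hΦ.nonneg _) (hΦ.nonneg _)]
  refine ENNReal.ofReal_le_ofReal ?_
  have := hΦ.convexOn.2 (mem_univ (f t)) (mem_univ (g t)) (by norm_num : (0:ℝ) ≤ 1 / 2)
    (by norm_num : (0:ℝ) ≤ 1 / 2) (by norm_num)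
  rw [smul_add]
  simp only [smul_eq_mul] at this
  linarith [hΦ.nonneg (f t), hΦ.nonneg (g t)]

/-- The embedding `L^Φ ⊂ L¹`, from `‖w‖ ≤ Φ(w) + sup_{‖z‖ ≤ 1} Φ*(z)`. -/
lemma IsNInf.exists_integral_norm_le_mul_luxNorm (hΦ : IsNInf Φ) (hT : 0 ≤ T) :
    ∃ c, 0 ≤ c ∧ ∀ g : ℝ → Ed d, IntegrableOn g (Icc 0 T) → (luxSet T Φ g).Nonempty →
      ∫ t in Icc 0 T, ‖g t‖ ≤ c * luxNorm T Φ g := by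
  obtain ⟨M, hM0, hM⟩ := hΦ.exists_conjFn_le
  refine ⟨1 + T * M, by positivity, fun g hg hne => le_mul_luxNorm hne (by positivity) ?_⟩
  rintro k ⟨hk, hρ⟩
  have hgk : AEMeasurable (fun t => k⁻¹ • g t) (volume.restrict (Icc 0 T)) :=
    hg.aemeasurable.fun_const_smul k⁻¹
  have hΦint := hΦ.integrableOn_comp hgk (hρ.trans_lt ENNReal.one_lt_top)
  have hMint : IntegrableOn (fun _ => M) (Icc (0:ℝ) T) := integrableOn_const (by simp)
  have hpt : ∀ t, ‖g t‖ ≤ k * (Φ (k⁻¹ • g t) + M) := fun t => by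
    have := hΦ.norm_le_add_of_conjFn_le hM (k⁻¹ • g t)
    rw [norm_smul, norm_inv, Real.norm_of_nonneg hk.le, inv_mul_le_iff₀ hk] at this
    exact this
  calc ∫ t in Icc 0 T, ‖g t‖ ≤ ∫ t in Icc 0 T, k * (Φ (k⁻¹ • g t) + M) :=
        integral_mono hg.norm ((hΦint.add hMint).const_mul k) hpt
    _ = k * ((∫ t in Icc 0 T, Φ (k⁻¹ • g t)) + T * M) := by
        rw [integral_const_mul, integral_add hΦint hMint, setIntegral_const, Real.volume_real_Icc,
          sub_zero, max_eq_left hT, smul_eq_mul]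
    _ ≤ (1 + T * M) * k := by
        nlinarith [hΦ.integral_comp_le_one hgk hρ]

lemma abs_integral_inner_le_of_norm_le {G v : ℝ → Ed d} {E : ℝ → ℝ} {M : ℝ}
    (hE : IntegrableOn E (Icc 0 T)) (hG : ∀ᵐ t ∂(volume.restrict (Icc 0 T)), ‖G t‖ ≤ E t)
    (hv : ∀ t ∈ Icc 0 T, ‖v t‖ ≤ M)
    (hGv : AEStronglyMeasurable (fun t => ⟪G t, v t⟫) (volume.restrict (Icc 0 T))) :
    IntegrableOn (fun t => ⟪G t, v t⟫) (Icc 0 T) ∧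
      |∫ t in Icc 0 T, ⟪G t, v t⟫| ≤ (∫ t in Icc 0 T, E t) * M := by
  have hpt : ∀ᵐ t ∂(volume.restrict (Icc 0 T)), ‖⟪G t, v t⟫‖ ≤ E t * M := by
    filter_upwards [hG, ae_restrict_mem measurableSet_Icc] with t hGt ht
    exact (norm_inner_le_norm _ _).trans
      (mul_le_mul hGt (hv t ht) (norm_nonneg _) ((norm_nonneg _).trans hGt))
  refine ⟨(hE.mul_const M).mono' hGv hpt, ?_⟩
  rw [← integral_mul_const, ← Real.norm_eq_abs]
  exact norm_integral_le_of_norm_le (hE.mul_const M) hpt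

/-- Hölder's inequality between `L^Φ` and the dual modular `∫ Φ*(G/λ)`. -/
lemma IsNInf.abs_integral_inner_le_mul_luxNorm (hΦ : IsNInf Φ) {lam : ℝ} (hlam : 0 < lam)
    {G v' : ℝ → Ed d} {E : ℝ → ℝ} (hE : IntegrableOn E (Icc 0 T))
    (hG : ∀ᵐ t ∂(volume.restrict (Icc 0 T)), conjFn Φ (lam⁻¹ • G t) ≤ E t)
    (hv' : MemLphi T Φ v')
    (hGv : AEStronglyMeasurable (fun t => ⟪G t, v' t⟫) (volume.restrict (Icc 0 T))) :
    IntegrableOn (fun t => ⟪G t, v' t⟫) (Icc 0 T) ∧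
      |∫ t in Icc 0 T, ⟪G t, v' t⟫| ≤ lam * (1 + ∫ t in Icc 0 T, E t) * luxNorm T Φ v' := by
  obtain ⟨hv'meas, l, hl, hρ⟩ := hv'
  have hpt : ∀ l > 0, ∀ᵐ t ∂(volume.restrict (Icc 0 T)),
      ‖⟪G t, v' t⟫‖ ≤ lam / l * (Φ (l • v' t) + E t) := fun l hl => by
    filter_upwards [hG] with t hGt
    rw [Real.norm_eq_abs]
    refine (hΦ.abs_inner_le_div_mul hlam hl _ _).trans ?_
    gcongr
  have hΦint : ∀ l > 0, rhoE T Φ (fun t => l • v' t) < ⊤ →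
      IntegrableOn (fun t => lam / l * (Φ (l • v' t) + E t)) (Icc 0 T) := fun l _ hρ =>
    ((hΦ.integrableOn_comp (hv'meas.fun_const_smul l) hρ).add hE).const_mul _
  have hE0 : 0 ≤ ∫ t in Icc 0 T, E t :=
    integral_nonneg_of_ae (hG.mono fun t ht => (hΦ.conjFn_nonneg _).trans ht)
  refine ⟨(hΦint l hl hρ).mono' hGv (hpt l hl), ?_⟩
  refine le_mul_luxNorm (hΦ.luxSet_nonempty hl hρ) (by positivity) fun k ⟨hk, hρk⟩ => ?_
  have hΦk := hΦ.integrableOn_comp (hv'meas.fun_const_smul k⁻¹) (hρk.trans_lt ENNReal.one_lt_top)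
  rw [← Real.norm_eq_abs]
  refine (norm_integral_le_of_norm_le (hΦint k⁻¹ (inv_pos.2 hk) (hρk.trans_lt ENNReal.one_lt_top))
    (hpt k⁻¹ (inv_pos.2 hk))).trans ?_
  rw [integral_const_mul, integral_add hΦk hE, div_inv_eq_mul]
  have := hΦ.integral_comp_le_one (hv'meas.fun_const_smul k⁻¹) hρk
  have : 0 ≤ lam * k := by positivity
  nlinarith

end Modular

section AbsolutelyContinuous

variable {T : ℝ} {v v' : ℝ → Ed d}

lemma integrableOn_of_eq_add_integral (hT : 0 ≤ T) (hv' : IntegrableOn v' (Icc 0 T))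
    (hv : ∀ t ∈ Icc 0 T, v t = v 0 + ∫ s in (0:ℝ)..t, v' s) : IntegrableOn v (Icc 0 T) := by
  have hprim : ContinuousOn (fun t => v 0 + ∫ s in (0:ℝ)..t, v' s) (Icc 0 T) := by
    refine continuousOn_const.add ?_
    have hv'' : IntegrableOn v' (uIcc 0 T) := by rwa [uIcc_of_le hT]
    simpa only [uIcc_of_le hT] using intervalIntegral.continuousOn_primitive_interval hv''
  exact hprim.integrableOn_Icc.congr_fun (fun t ht => (hv t ht).symm) measurableSet_Icc

/-- Averaging `‖v t‖ ≤ ‖v r‖ + ∫ ‖v'‖` over `r ∈ [0,T]`. -/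
lemma norm_le_of_eq_add_integral (hT : 0 < T) (hv' : IntegrableOn v' (Icc 0 T))
    (hvint : IntegrableOn v (Icc 0 T)) (hv : ∀ t ∈ Icc 0 T, v t = v 0 + ∫ s in (0:ℝ)..t, v' s)
    {t : ℝ} (ht : t ∈ Icc 0 T) :
    ‖v t‖ ≤ T⁻¹ * (∫ r in Icc 0 T, ‖v r‖) + ∫ r in Icc 0 T, ‖v' r‖ := by
  set B := ∫ r in Icc 0 T, ‖v' r‖
  have hii : ∀ a ∈ Icc 0 T, ∀ b ∈ Icc 0 T, IntervalIntegrable v' volume a b := fun a ha b hb =>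
    (intervalIntegrable_iff.2 (hv'.mono_set (uIoc_subset_uIcc.trans (uIcc_subset_Icc ha hb))))
  have h0 : (0:ℝ) ∈ Icc 0 T := ⟨le_rfl, hT.le⟩
  have hpt : ∀ r ∈ Icc 0 T, ‖v t‖ ≤ ‖v r‖ + B := by
    intro r hr
    have hvt : v t = v r + ∫ s in r..t, v' s := by
      rw [hv t ht, hv r hr, ← intervalIntegral.integral_add_adjacent_intervals
        (hii 0 h0 r hr) (hii r hr t ht), add_assoc]
    rw [hvt]
    refine (norm_add_le _ _).trans (add_le_add_right ?_ _)
    refine intervalIntegral.norm_integral_le_integral_norm_uIoc.trans ?_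
    exact setIntegral_mono_set hv'.norm (.of_forall fun _ => norm_nonneg _)
      (uIoc_subset_uIcc.trans (uIcc_subset_Icc hr ht)).eventuallyLE
  have hconst : ∀ c : ℝ, IntegrableOn (fun _ => c) (Icc (0:ℝ) T) :=
    fun c => integrableOn_const (by simp)
  have hint := setIntegral_mono_on (hconst _) (hvint.norm.add (hconst B)) measurableSet_Icc hpt
  rw [Pi.add_def, integral_add hvint.norm (hconst B), setIntegral_const, setIntegral_const,
    Real.volume_real_Icc, sub_zero, max_eq_left hT.le, smul_eq_mul, smul_eq_mul] at hint
  rw [inv_mul_eq_div, div_add' _ _ _ hT.ne', le_div_iff₀' hT]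
  linarith

end AbsolutelyContinuous

lemma hasDerivAt_comp_add_smul {E F : Type*} [NormedAddCommGroup E] [InnerProductSpace ℝ E]
    [CompleteSpace E] [NormedAddCommGroup F] [InnerProductSpace ℝ F] [CompleteSpace F]
    {f : E × F → ℝ} (hf : Differentiable ℝ f) (x vx : E) (y vy : F) (s : ℝ) :
    HasDerivAt (fun r : ℝ => f (x + r • vx, y + r • vy))
      (⟪gradient (fun x' => f (x', y + s • vy)) (x + s • vx), vx⟫ +
        ⟪gradient (fun y' => f (x + s • vx, y')) (y + s • vy), vy⟫) s := by
  set p : E × F := (x + s • vx, y + s • vy)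
  have hD := (hf p).hasFDerivAt
  have hgx : ⟪gradient (fun x' => f (x', p.2)) p.1, vx⟫ = fderiv ℝ f p (vx, 0) := by
    have h : HasFDerivAt (fun x' => f (x', p.2)) _ p.1 :=
      hD.comp p.1 (hasFDerivAt_prodMk_left (𝕜 := ℝ) p.1 p.2)
    rw [gradient, InnerProductSpace.toDual_symm_apply, h.fderiv]
    simp
  have hgy : ⟪gradient (fun y' => f (p.1, y')) p.2, vy⟫ = fderiv ℝ f p (0, vy) := by
    have h : HasFDerivAt (fun y' => f (p.1, y')) _ p.2 :=
      hD.comp p.2 (hasFDerivAt_prodMk_right (𝕜 := ℝ) p.1 p.2)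
    rw [gradient, InnerProductSpace.toDual_symm_apply, h.fderiv]
    simp
  have hline : HasDerivAt (fun r : ℝ => (x + r • vx, y + r • vy)) (vx, vy) s := by
    refine .prodMk ?_ ?_
    · simpa using ((hasDerivAt_id s).smul_const vx).const_add x
    · simpa using ((hasDerivAt_id s).smul_const vy).const_add y
  refine (hD.comp_hasDerivAt s hline).congr_deriv ?_
  rw [hgx, hgy, ← map_add, Prod.mk_add_mk, add_zero, zero_add]

namespace CaraL

variable {T : ℝ} {L : ℝ → Ed d → Ed d → ℝ}

/-- Redefine `L` as `0` on a measurable null set containing every `t` where `L t` fails to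
be `C¹`; the result is continuous in `(x, y)` for every `t`. -/
lemma exists_measurable_modification (hLC : CaraL T L) :
    ∃ L' : ℝ → Ed d × Ed d → ℝ, Measurable (fun q : (Ed d × Ed d) × ℝ => L' q.2 q.1) ∧
      ∀ᵐ t ∂(volume.restrict (Icc 0 T)), ∀ p, L' t p = L t p.1 p.2 := by
  set N := toMeasurable (volume.restrict (Icc 0 T))
    {t | ¬ ContDiff ℝ 1 fun p : Ed d × Ed d => L t p.1 p.2}
  have hN : ∀ t ∉ N, ContDiff ℝ 1 fun p : Ed d × Ed d => L t p.1 p.2 :=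
    fun t ht => not_not.1 fun h => ht (subset_toMeasurable _ _ h)
  refine ⟨fun t p => Nᶜ.indicator (fun s => L s p.1 p.2) t, ?_, ?_⟩
  · refine measurable_uncurry_of_continuous_of_measurable (u := fun (p : Ed d × Ed d) t =>
      Nᶜ.indicator (fun s => L s p.1 p.2) t) (fun t => ?_)
      (fun p => (hLC.1 p.1 p.2).indicator (measurableSet_toMeasurable _ _).compl)
    by_cases ht : t ∈ N
    · simpa [ht] using continuous_const
    · simpa [ht] using (hN t ht).continuous
  · have hnull : volume.restrict (Icc 0 T) N = 0 := by
      rw [measure_toMeasurable]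
      exact ae_iff.1 hLC.2
    filter_upwards [measure_eq_zero_iff_ae_notMem.1 hnull] with t ht p
    simp [ht]

lemma aestronglyMeasurable_comp (hLC : CaraL T L) {f g : ℝ → Ed d}
    (hf : AEMeasurable f (volume.restrict (Icc 0 T)))
    (hg : AEMeasurable g (volume.restrict (Icc 0 T))) :
    AEStronglyMeasurable (fun t => L t (f t) (g t)) (volume.restrict (Icc 0 T)) := by
  obtain ⟨L', hL'meas, hL'⟩ := hLC.exists_measurable_modification
  refine (hL'meas.comp_aemeasurable ((hf.prodMk hg).prodMk aemeasurable_id)).aestronglyMeasurable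
    |>.congr ?_
  filter_upwards [hL'] with t ht
  exact ht (f t, g t)

/-- The directional derivative is the a.e. limit of the measurable difference quotients
along `h = 1/n`. -/
lemma aestronglyMeasurable_inner_gradient (hLC : CaraL T L) {x y vx vy : ℝ → Ed d}
    (hx : AEMeasurable x (volume.restrict (Icc 0 T)))
    (hy : AEMeasurable y (volume.restrict (Icc 0 T)))
    (hvx : AEMeasurable vx (volume.restrict (Icc 0 T)))
    (hvy : AEMeasurable vy (volume.restrict (Icc 0 T))) :
    AEStronglyMeasurable (fun t => ⟪gradient (fun x' => L t x' (y t)) (x t), vx t⟫ +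
      ⟪gradient (fun y' => L t (x t) y') (y t), vy t⟫) (volume.restrict (Icc 0 T)) := by
  set φ : ℝ → ℝ → ℝ := fun t r => L t (x t + r • vx t) (y t + r • vy t)
  have hφ : ∀ r, AEStronglyMeasurable (φ · r) (volume.restrict (Icc 0 T)) := fun r =>
    hLC.aestronglyMeasurable_comp (hx.fun_add (hvx.fun_const_smul r))
      (hy.fun_add (hvy.fun_const_smul r))
  have hslope : ∀ n : ℕ, AEStronglyMeasurable (fun t => slope (φ t) 0 (n : ℝ)⁻¹)
      (volume.restrict (Icc 0 T)) := fun n => by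
    simpa only [slope, vsub_eq_sub, sub_zero, smul_eq_mul, Pi.sub_apply] using
      ((hφ _).sub (hφ 0)).const_mul _
  have hseq : Tendsto (fun n : ℕ => (n : ℝ)⁻¹) atTop (𝓝[≠] 0) :=
    (tendsto_inv_atTop_nhdsGT_zero.comp tendsto_natCast_atTop_atTop).mono_right
      (nhdsWithin_mono _ fun _ hr => ne_of_gt hr)
  refine aestronglyMeasurable_of_tendsto_ae atTop hslope ?_
  filter_upwards [hLC.2] with t ht
  have hder := hasDerivAt_comp_add_smul (ht.differentiable one_ne_zero) (x t) (vx t) (y t)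
    (vy t) 0
  simp only [zero_smul, add_zero] at hder
  exact (hasDerivAt_iff_tendsto_slope.1 hder).comp hseq

end CaraL

namespace IsNInf

variable {T : ℝ} {Φ : Ed d → ℝ}

/-- The admissible set of `u' - v₀` must be shown nonempty first: as `sInf ∅ = 0`, the bound
`luxNorm (u' - v₀) < Λ` alone yields no admissible scale. -/
lemma exists_bounded_of_distLinf_lt (hΦ : IsNInf Φ) {u' : ℝ → Ed d} (hu' : MemLphi T Φ u')
    {Lam : ℝ} (h : distLinf T Φ u' < Lam) :
    ∃ v₀ : ℝ → Ed d, ∃ C₀ ℓ : ℝ, Measurable v₀ ∧ (∀ t, ‖v₀ t‖ ≤ C₀) ∧ 0 < ℓ ∧ ℓ < Lam ∧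
      rhoE T Φ (fun t => ℓ⁻¹ • (u' t - v₀ t)) ≤ 1 := by
  obtain ⟨hu'meas, l, hl, hρ⟩ := hu'
  have hne : {r : ℝ | ∃ v : ℝ → Ed d, Measurable v ∧ (∃ C : ℝ, ∀ t, ‖v t‖ ≤ C) ∧
      r = luxNorm T Φ (fun t => u' t - v t)}.Nonempty :=
    ⟨_, fun _ => 0, measurable_const, ⟨0, fun _ => by simp⟩, rfl⟩
  obtain ⟨_, ⟨v₀, hv₀, ⟨C₀, hC₀⟩, rfl⟩, hlt⟩ :=
    (csInf_lt_iff ⟨0, by rintro _ ⟨v, -, -, rfl⟩; exact luxNorm_nonneg _⟩ hne).1 h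
  have hsplit : (fun t => (l / 2) • (u' t - v₀ t)) =
      fun t => (1 / 2 : ℝ) • (l • u' t + (-l) • v₀ t) := by
    funext t
    module
  have hfin : rhoE T Φ (fun t => (l / 2) • (u' t - v₀ t)) < ⊤ := by
    rw [hsplit]
    refine (hΦ.rhoE_midpoint_le (hu'meas.fun_const_smul l) _).trans_lt
      (ENNReal.add_lt_top.2 ⟨hρ, hΦ.rhoE_lt_top_of_norm_le (M := l * C₀) fun t _ => ?_⟩)
    rw [norm_smul, Real.norm_eq_abs, abs_neg, abs_of_pos hl]
    exact mul_le_mul_of_nonneg_left (hC₀ t) hl.le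
  obtain ⟨ℓ, ⟨hℓ, hρℓ⟩, hℓlt⟩ :=
    exists_mem_luxSet_lt (hΦ.luxSet_nonempty (half_pos hl) hfin) hlt
  exact ⟨v₀, C₀, ℓ, hv₀, hC₀, hℓ, hℓlt, hρℓ⟩

/-- With `α = ℓ/Λ`, `β = (1-α)/2` and `c = (βΛ)⁻¹`,
`Λ⁻¹(u' + s v') = α ℓ⁻¹(u' - v₀) + β c v₀ + β c s v'`, and convexity bounds each term. -/
lemma exists_integrable_bound (hΦ : IsNInf Φ) {u' v₀ v' : ℝ → Ed d} {C₀ ℓ Lam l : ℝ}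
    (hw : AEMeasurable (fun t => u' t - v₀ t) (volume.restrict (Icc 0 T)))
    (hC₀ : ∀ t, ‖v₀ t‖ ≤ C₀) (hℓ : 0 < ℓ) (hℓLam : ℓ < Lam)
    (hρw : rhoE T Φ (fun t => ℓ⁻¹ • (u' t - v₀ t)) ≤ 1)
    (hv' : AEMeasurable v' (volume.restrict (Icc 0 T))) (hl : 0 < l)
    (hρv' : rhoE T Φ (fun t => l • v' t) < ⊤) :
    ∃ ε : ℝ, 0 < ε ∧ ∃ D : ℝ → ℝ, IntegrableOn D (Icc 0 T) ∧
      ∀ s, |s| ≤ ε → ∀ t, Φ (Lam⁻¹ • (u' t + s • v' t)) ≤ D t := by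
  have hLam : 0 < Lam := hℓ.trans hℓLam
  set α := ℓ / Lam
  have hα1 : α < 1 := (div_lt_one hLam).2 hℓLam
  set β := (1 - α) / 2
  have hβ : 0 < β := by simp only [β]; linarith
  set c := (β * Lam)⁻¹
  have hc : 0 < c := by positivity
  obtain ⟨K, hK⟩ := (isCompact_closedBall (0 : Ed d) (c * C₀)).bddAbove_image
    hΦ.continuous.continuousOn
  refine ⟨l / c, div_pos hl hc,
    fun t => α * Φ (ℓ⁻¹ • (u' t - v₀ t)) + β * K + β * Φ (l • v' t), ?_, fun s hs t => ?_⟩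
  · have hwint := hΦ.integrableOn_comp (hw.fun_const_smul ℓ⁻¹) (hρw.trans_lt ENNReal.one_lt_top)
    exact ((hwint.const_mul α).add (integrableOn_const (by simp))).add
      ((hΦ.integrableOn_comp (hv'.fun_const_smul l) hρv').const_mul β)
  have hsum : Lam⁻¹ • (u' t + s • v' t) =
      α • (ℓ⁻¹ • (u' t - v₀ t)) + β • (c • v₀ t) + β • ((c * s) • v' t) := by
    have hαℓ : α * ℓ⁻¹ = Lam⁻¹ := by simp only [α]; field_simp
    have hβc : β * c = Lam⁻¹ := by simp only [c]; field_simp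
    rw [smul_smul, smul_smul, smul_smul, ← mul_assoc, hαℓ, hβc, smul_sub, mul_smul, smul_add]
    abel
  have hv₀ : Φ (c • v₀ t) ≤ K := hK ⟨c • v₀ t, by
    rw [mem_closedBall_zero_iff, norm_smul, Real.norm_of_nonneg hc.le]
    exact mul_le_mul_of_nonneg_left (hC₀ t) hc.le, rfl⟩
  have hsv' : Φ ((c * s) • v' t) ≤ Φ (l • v' t) := hΦ.map_smul_le_of_abs_le (by
    rw [abs_mul, abs_of_pos hc, ← le_div_iff₀' hc]
    exact hs) _
  rw [hsum]
  refine (hΦ.map_add_add_le (div_pos hℓ hLam).le hβ.le (by ring) _ _ _).trans ?_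
  have := mul_le_mul_of_nonneg_left hv₀ hβ.le
  have := mul_le_mul_of_nonneg_left hsv' hβ.le
  linarith

lemma exists_integrable_bound_of_distLinf_lt (hΦ : IsNInf Φ) {u' : ℝ → Ed d}
    (hu' : MemLphi T Φ u') {Lam : ℝ} (h : distLinf T Φ u' < Lam) {v' : ℝ → Ed d}
    (hv' : MemLphi T Φ v') :
    ∃ ε : ℝ, 0 < ε ∧ ∃ D : ℝ → ℝ, IntegrableOn D (Icc 0 T) ∧
      ∀ s, |s| ≤ ε → ∀ t, Φ (Lam⁻¹ • (u' t + s • v' t)) ≤ D t := by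
  obtain ⟨v₀, C₀, ℓ, hv₀, hC₀, hℓ, hℓLam, hρw⟩ := hΦ.exists_bounded_of_distLinf_lt hu' h
  obtain ⟨hv'meas, l, hl, hρv'⟩ := hv'
  exact hΦ.exists_integrable_bound (hu'.1.sub hv₀.aemeasurable) hC₀ hℓ hℓLam hρw hv'meas hl hρv'

lemma integrableOn_comp_inv_smul_of_distLinf_lt (hΦ : IsNInf Φ) {u' : ℝ → Ed d}
    (hu' : MemLphi T Φ u') {Lam : ℝ} (h : distLinf T Φ u' < Lam) :
    IntegrableOn (fun t => Φ (Lam⁻¹ • u' t)) (Icc 0 T) := by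
  obtain ⟨ε, hε, D, hD, hΦD⟩ := hΦ.exists_integrable_bound_of_distLinf_lt hu' h
    (v' := 0) ⟨aemeasurable_const, 1, one_pos, by simp [rhoE, hΦ.map_zero]⟩
  refine hD.mono' (hΦ.continuous.measurable.comp_aemeasurable
    (hu'.1.fun_const_smul _)).aestronglyMeasurable (.of_forall fun t => ?_)
  simpa [abs_of_nonneg (hΦ.nonneg _)] using hΦD 0 (by simpa using hε.le) t

end IsNInf

section Action

variable {T : ℝ} {Φ : Ed d → ℝ} {L : ℝ → Ed d → Ed d → ℝ} {lam Lam : ℝ}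

lemma CondS.exists_local_bound (hΦ : IsNInf Φ) (hLS : CondS T Φ L lam Lam) :
    ∃ b : ℝ → ℝ, IntegrableOn b (Icc 0 T) ∧ ∀ R, ∃ A, 0 ≤ A ∧
      ∀ᵐ t ∂(volume.restrict (Icc 0 T)), ∀ x y, ‖x‖ ≤ R →
        |L t x y| + ‖gradient (fun x' => L t x' y) x‖ +
          conjFn Φ (lam⁻¹ • gradient (fun y' => L t x y') y) ≤ A * (b t + Φ (Lam⁻¹ • y)) := by
  obtain ⟨a, b, ha, ha0, hb, hb0, hS⟩ := hLS
  refine ⟨b, hb, fun R => ?_⟩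
  obtain ⟨A, hA⟩ := (isCompact_closedBall (0 : Ed d) R).bddAbove_image ha.continuousOn
  refine ⟨max A 0, le_max_right A 0, ?_⟩
  filter_upwards [hS] with t ht x y hx
  refine (ht x y).trans (mul_le_mul_of_nonneg_right ?_ (add_nonneg (hb0 t) (hΦ.nonneg _)))
  exact (hA ⟨x, mem_closedBall_zero_iff.2 hx, rfl⟩).trans (le_max_left A 0)

/-- Differentiation under the integral sign; by Young's inequality the `s`-derivatives of the
integrand are dominated by `E M + (λ / l) (Φ(l v') + E)`. -/
lemma hasDerivAt_action_of_envelope (hΦ : IsNInf Φ) (hlam : 0 < lam) (hLC : CaraL T L)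
    {u u' v v' : ℝ → Ed d} (hu : AEMeasurable u (volume.restrict (Icc 0 T)))
    (hu' : AEMeasurable u' (volume.restrict (Icc 0 T)))
    (hv : AEMeasurable v (volume.restrict (Icc 0 T)))
    (hv' : AEMeasurable v' (volume.restrict (Icc 0 T)))
    {M l ε : ℝ} (hvM : ∀ t ∈ Icc 0 T, ‖v t‖ ≤ M) (hl : 0 < l)
    (hv'Φ : IntegrableOn (fun t => Φ (l • v' t)) (Icc 0 T)) (hε : 0 < ε)
    {E : ℝ → ℝ} (hE : IntegrableOn E (Icc 0 T))
    (hLE : ∀ᵐ t ∂(volume.restrict (Icc 0 T)), ∀ s : ℝ, |s| ≤ ε →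
      |L t (u t + s • v t) (u' t + s • v' t)| +
        ‖gradient (fun x' => L t x' (u' t + s • v' t)) (u t + s • v t)‖ +
        conjFn Φ (lam⁻¹ • gradient (fun y' => L t (u t + s • v t) y') (u' t + s • v' t)) ≤
      E t) :
    (∀ s : ℝ, |s| ≤ ε →
      IntegrableOn (fun t => L t (u t + s • v t) (u' t + s • v' t)) (Icc 0 T)) ∧
    HasDerivAt (fun s : ℝ => ∫ t in Icc 0 T, L t (u t + s • v t) (u' t + s • v' t))
      (∫ t in Icc 0 T, (⟪gradient (fun x' => L t x' (u' t)) (u t), v t⟫ +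
        ⟪gradient (fun y' => L t (u t) y') (u' t), v' t⟫)) 0 := by
  set F' : ℝ → ℝ → ℝ := fun s t =>
    ⟪gradient (fun x' => L t x' (u' t + s • v' t)) (u t + s • v t), v t⟫ +
      ⟪gradient (fun y' => L t (u t + s • v t) y') (u' t + s • v' t), v' t⟫
  have hF'0 : F' 0 = fun t => ⟪gradient (fun x' => L t x' (u' t)) (u t), v t⟫ +
      ⟪gradient (fun y' => L t (u t) y') (u' t), v' t⟫ := by
    simp only [F', zero_smul, add_zero]
  have hmeas : ∀ s : ℝ, AEStronglyMeasurable (fun t => L t (u t + s • v t) (u' t + s • v' t))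
      (volume.restrict (Icc 0 T)) := fun s =>
    hLC.aestronglyMeasurable_comp (hu.fun_add (hv.fun_const_smul s))
      (hu'.fun_add (hv'.fun_const_smul s))
  have hint : ∀ s : ℝ, |s| ≤ ε →
      IntegrableOn (fun t => L t (u t + s • v t) (u' t + s • v' t)) (Icc 0 T) := by
    intro s hs
    refine hE.mono' (hmeas s) ?_
    filter_upwards [hLE] with t ht
    linarith [ht s hs, norm_nonneg (gradient (fun x' => L t x' (u' t + s • v' t)) (u t + s • v t)),
      hΦ.conjFn_nonneg (lam⁻¹ • gradient (fun y' => L t (u t + s • v t) y') (u' t + s • v' t)),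
      Real.norm_eq_abs (L t (u t + s • v t) (u' t + s • v' t))]
  have hbound : ∀ᵐ t ∂(volume.restrict (Icc 0 T)), ∀ s ∈ Metric.ball (0:ℝ) ε,
      ‖F' s t‖ ≤ E t * M + lam / l * (Φ (l • v' t) + E t) := by
    filter_upwards [hLE, ae_restrict_mem measurableSet_Icc] with t ht htT s hs
    have h := ht s (mem_ball_zero_iff.1 hs).le
    have := abs_nonneg (L t (u t + s • v t) (u' t + s • v' t))
    refine hΦ.abs_inner_add_inner_le hlam hl ?_ ?_ (hvM t htT)
    · linarith [hΦ.conjFn_nonneg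
        (lam⁻¹ • gradient (fun y' => L t (u t + s • v t) y') (u' t + s • v' t))]
    · linarith [norm_nonneg (gradient (fun x' => L t x' (u' t + s • v' t)) (u t + s • v t))]
  have hdiff : ∀ᵐ t ∂(volume.restrict (Icc 0 T)), ∀ s ∈ Metric.ball (0:ℝ) ε,
      HasDerivAt (fun r => L t (u t + r • v t) (u' t + r • v' t)) (F' s t) s := by
    filter_upwards [hLC.2] with t ht s _
    exact hasDerivAt_comp_add_smul (f := fun p : Ed d × Ed d => L t p.1 p.2)
      (ht.differentiable one_ne_zero) (u t) (v t) (u' t) (v' t) s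
  refine ⟨hint, hF'0 ▸ (hasDerivAt_integral_of_dominated_loc_of_deriv_le
    (Metric.ball_mem_nhds 0 hε) (.of_forall hmeas) (hint 0 (by simpa using hε.le))
    (hF'0 ▸ hLC.aestronglyMeasurable_inner_gradient hu hu' hv hv') hbound
    ((hE.mul_const M).add ((hv'Φ.add hE).const_mul _)) hdiff).2⟩

lemma IsNInf.abs_integral_inner_gradient_le (hΦ : IsNInf Φ) (hT : 0 < T) (hlam : 0 < lam)
    (hLC : CaraL T L) {u u' : ℝ → Ed d} (hu : AEMeasurable u (volume.restrict (Icc 0 T)))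
    (hu' : AEMeasurable u' (volume.restrict (Icc 0 T))) {E : ℝ → ℝ}
    (hE : IntegrableOn E (Icc 0 T))
    (hGE : ∀ᵐ t ∂(volume.restrict (Icc 0 T)), ‖gradient (fun x' => L t x' (u' t)) (u t)‖ ≤ E t ∧
      conjFn Φ (lam⁻¹ • gradient (fun y' => L t (u t) y') (u' t)) ≤ E t)
    {v v' : ℝ → Ed d} (hv : MemW1Lphi T Φ v v') :
    |∫ t in Icc 0 T, (⟪gradient (fun x' => L t x' (u' t)) (u t), v t⟫ +
        ⟪gradient (fun y' => L t (u t) y') (u' t), v' t⟫)| ≤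
      (∫ t in Icc 0 T, E t) * (T⁻¹ * (∫ t in Icc 0 T, ‖v t‖) + ∫ t in Icc 0 T, ‖v' t‖) +
        lam * (1 + ∫ t in Icc 0 T, E t) * luxNorm T Φ v' := by
  obtain ⟨hv'int, hv'Φ, hvrep⟩ := hv
  have hvint := integrableOn_of_eq_add_integral hT.le hv'int hvrep
  have h0 : AEMeasurable (fun _ => (0 : Ed d)) (volume.restrict (Icc 0 T)) := aemeasurable_const
  obtain ⟨hint₁, h₁⟩ := abs_integral_inner_le_of_norm_le hE (hGE.mono fun t h => h.1)
    (fun t ht => norm_le_of_eq_add_integral hT hv'int hvint hvrep ht)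
    (by simpa using hLC.aestronglyMeasurable_inner_gradient hu hu' hvint.aemeasurable h0)
  obtain ⟨hint₂, h₂⟩ := hΦ.abs_integral_inner_le_mul_luxNorm hlam hE (hGE.mono fun t h => h.2)
    hv'Φ (by simpa using hLC.aestronglyMeasurable_inner_gradient hu hu' h0 hv'Φ.1)
  rw [integral_add hint₁ hint₂]
  exact (abs_add_le _ _).trans (add_le_add h₁ h₂)

lemma hasDerivAt_action (hT : 0 < T) (hΦ : IsNInf Φ) (hlam : 0 < lam) (hLC : CaraL T L)
    (hLS : CondS T Φ L lam Lam) {u u' : ℝ → Ed d} (hu : MemW1Lphi T Φ u u')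
    (hdist : distLinf T Φ u' < Lam) {v v' : ℝ → Ed d} (hv : MemW1Lphi T Φ v v') :
    (∃ ε > (0:ℝ), ∀ s : ℝ, |s| < ε →
        IntegrableOn (fun t => L t (u t + s • v t) (u' t + s • v' t)) (Icc 0 T)) ∧
      HasDerivAt (fun s : ℝ => ∫ t in Icc 0 T, L t (u t + s • v t) (u' t + s • v' t))
        (∫ t in Icc 0 T, (⟪gradient (fun x' => L t x' (u' t)) (u t), v t⟫ +
          ⟪gradient (fun y' => L t (u t) y') (u' t), v' t⟫)) 0 := by
  obtain ⟨hu'int, hu'Φ, hurep⟩ := hu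
  obtain ⟨hv'int, hv'Φ, hvrep⟩ := hv
  have huint := integrableOn_of_eq_add_integral hT.le hu'int hurep
  have hvint := integrableOn_of_eq_add_integral hT.le hv'int hvrep
  obtain ⟨Mu, hMu⟩ : ∃ M, ∀ t ∈ Icc 0 T, ‖u t‖ ≤ M :=
    ⟨_, fun t ht => norm_le_of_eq_add_integral hT hu'int huint hurep ht⟩
  obtain ⟨Mv, hMv⟩ : ∃ M, ∀ t ∈ Icc 0 T, ‖v t‖ ≤ M :=
    ⟨_, fun t ht => norm_le_of_eq_add_integral hT hv'int hvint hvrep ht⟩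
  obtain ⟨ε, hε, D, hD, hΦD⟩ := hΦ.exists_integrable_bound_of_distLinf_lt hu'Φ hdist hv'Φ
  obtain ⟨b, hb, hlocal⟩ := hLS.exists_local_bound hΦ
  obtain ⟨A, hA, hLA⟩ := hlocal (Mu + ε * Mv)
  have hLE : ∀ᵐ t ∂(volume.restrict (Icc 0 T)), ∀ s : ℝ, |s| ≤ ε →
      |L t (u t + s • v t) (u' t + s • v' t)| +
        ‖gradient (fun x' => L t x' (u' t + s • v' t)) (u t + s • v t)‖ +
        conjFn Φ (lam⁻¹ • gradient (fun y' => L t (u t + s • v t) y') (u' t + s • v' t)) ≤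
      A * (b t + D t) := by
    filter_upwards [hLA, ae_restrict_mem measurableSet_Icc] with t ht htT s hs
    refine (ht _ _ ?_).trans (mul_le_mul_of_nonneg_left (add_le_add_right (hΦD s hs t) _) hA)
    refine (norm_add_le _ _).trans (add_le_add (hMu t htT) ?_)
    rw [norm_smul, Real.norm_eq_abs]
    exact mul_le_mul hs (hMv t htT) (norm_nonneg _) hε.le
  obtain ⟨l, hl, hρ⟩ := hv'Φ.2
  obtain ⟨hint, hderiv⟩ := hasDerivAt_action_of_envelope hΦ hlam hLC huint.aemeasurable hu'Φ.1
    hvint.aemeasurable hv'Φ.1 hMv hl (hΦ.integrableOn_comp (hv'Φ.1.fun_const_smul l) hρ) hε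
    ((hb.add hD).const_mul A) hLE
  exact ⟨⟨ε, hε, fun s hs => hint s hs.le⟩, hderiv⟩

lemma CondS.exists_envelope (hT : 0 < T) (hΦ : IsNInf Φ) (hLS : CondS T Φ L lam Lam)
    {u u' : ℝ → Ed d} (hu : MemW1Lphi T Φ u u') (hdist : distLinf T Φ u' < Lam) :
    ∃ E : ℝ → ℝ, IntegrableOn E (Icc 0 T) ∧ ∀ᵐ t ∂(volume.restrict (Icc 0 T)),
      ‖gradient (fun x' => L t x' (u' t)) (u t)‖ ≤ E t ∧
        conjFn Φ (lam⁻¹ • gradient (fun y' => L t (u t) y') (u' t)) ≤ E t := by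
  obtain ⟨hu'int, hu'Φ, hurep⟩ := hu
  have huint := integrableOn_of_eq_add_integral hT.le hu'int hurep
  obtain ⟨b, hb, hlocal⟩ := hLS.exists_local_bound hΦ
  obtain ⟨A, hA, hLA⟩ := hlocal (T⁻¹ * (∫ t in Icc 0 T, ‖u t‖) + ∫ t in Icc 0 T, ‖u' t‖)
  refine ⟨fun t => A * (b t + Φ (Lam⁻¹ • u' t)),
    (hb.add (hΦ.integrableOn_comp_inv_smul_of_distLinf_lt hu'Φ hdist)).const_mul A, ?_⟩
  filter_upwards [hLA, ae_restrict_mem measurableSet_Icc] with t ht htT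
  have h := ht (u t) (u' t) (norm_le_of_eq_add_integral hT hu'int huint hurep htT)
  have := abs_nonneg (L t (u t) (u' t))
  exact ⟨by linarith [hΦ.conjFn_nonneg (lam⁻¹ • gradient (fun y' => L t (u t) y') (u' t))],
    by linarith [norm_nonneg (gradient (fun x' => L t x' (u' t)) (u t))]⟩

lemma exists_abs_integral_inner_gradient_le (hT : 0 < T) (hΦ : IsNInf Φ) (hlam : 0 < lam)
    (hLC : CaraL T L) (hLS : CondS T Φ L lam Lam) {u u' : ℝ → Ed d} (hu : MemW1Lphi T Φ u u')
    (hdist : distLinf T Φ u' < Lam) :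
    ∃ C : ℝ, ∀ v v' : ℝ → Ed d, MemW1Lphi T Φ v v' →
      |∫ t in Icc 0 T, (⟪gradient (fun x' => L t x' (u' t)) (u t), v t⟫ +
          ⟪gradient (fun y' => L t (u t) y') (u' t), v' t⟫)| ≤
        C * (luxNorm T Φ v + luxNorm T Φ v') := by
  obtain ⟨E, hE, hGE⟩ := hLS.exists_envelope hT hΦ hu hdist
  obtain ⟨c, hc, hL1⟩ := hΦ.exists_integral_norm_le_mul_luxNorm hT.le
  set B := ∫ t in Icc 0 T, E t
  have hB : 0 ≤ B := integral_nonneg_of_ae (hGE.mono fun t h => (norm_nonneg _).trans h.1)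
  refine ⟨B * T⁻¹ * c + B * c + lam * (1 + B), fun v v' hv => ?_⟩
  have h := hΦ.abs_integral_inner_gradient_le hT hlam hLC
    (integrableOn_of_eq_add_integral hT.le hu.1 hu.2.2).aemeasurable hu.2.1.1 hE hGE hv
  obtain ⟨hv'int, ⟨hv'meas, l, hl, hρ⟩, hvrep⟩ := hv
  have hvint := integrableOn_of_eq_add_integral hT.le hv'int hvrep
  have hvL := hL1 v hvint (hΦ.luxSet_nonempty one_pos (hΦ.rhoE_lt_top_of_norm_le fun t ht => by
    simpa using norm_le_of_eq_add_integral hT hv'int hvint hvrep ht))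
  have hv'L := hL1 v' hv'int (hΦ.luxSet_nonempty hl hρ)
  have hnv := luxNorm_nonneg (T := T) (Φ := Φ) v
  have hnv' := luxNorm_nonneg (T := T) (Φ := Φ) v'
  have hBT : 0 ≤ B * T⁻¹ := mul_nonneg hB (inv_nonneg.2 hT.le)
  have hsup : B * (T⁻¹ * (∫ t in Icc 0 T, ‖v t‖) + ∫ t in Icc 0 T, ‖v' t‖) ≤
      B * T⁻¹ * (c * luxNorm T Φ v) + B * (c * luxNorm T Φ v') := by
    rw [mul_add, ← mul_assoc]
    exact add_le_add (mul_le_mul_of_nonneg_left hvL hBT) (mul_le_mul_of_nonneg_left hv'L hB)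
  refine h.trans ?_
  nlinarith [mul_nonneg (mul_nonneg hBT hc) hnv', mul_nonneg (mul_nonneg hB hc) hnv,
    mul_nonneg (by positivity : 0 ≤ lam * (1 + B)) hnv]

end Action

theorem statement14_general {d : ℕ} (T : ℝ) (hT : 0 < T) (Φ : Ed d → ℝ) (hΦ : IsNInf Φ)
    (L : ℝ → Ed d → Ed d → ℝ) (lam Lam : ℝ) (hlam : 0 < lam)
    (hLC : CaraL T L) (hLS : CondS T Φ L lam Lam)
    (u u' : ℝ → Ed d) (hu : MemW1Lphi T Φ u u') (hdist : distLinf T Φ u' < Lam) :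
    (∀ v v' : ℝ → Ed d, MemW1Lphi T Φ v v' →
      (∃ ε > (0:ℝ), ∀ s : ℝ, |s| < ε →
        IntegrableOn (fun t => L t (u t + s • v t) (u' t + s • v' t)) (Icc (0:ℝ) T)) ∧
      HasDerivAt (fun s : ℝ => ∫ t in Icc (0:ℝ) T, L t (u t + s • v t) (u' t + s • v' t))
        (∫ t in Icc (0:ℝ) T,
          (⟪gradient (fun x' => L t x' (u' t)) (u t), v t⟫ +
            ⟪gradient (fun y' => L t (u t) y') (u' t), v' t⟫)) 0) ∧
    ∃ C : ℝ, ∀ v v' : ℝ → Ed d, MemW1Lphi T Φ v v' →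
      |∫ t in Icc (0:ℝ) T,
          (⟪gradient (fun x' => L t x' (u' t)) (u t), v t⟫ +
            ⟪gradient (fun y' => L t (u t) y') (u' t), v' t⟫)| ≤
        C * (luxNorm T Φ v + luxNorm T Φ v') :=
  ⟨fun _ _ hv => hasDerivAt_action hT hΦ hlam hLC hLS hu hdist hv,
    exists_abs_integral_inner_gradient_le hT hΦ hlam hLC hLS hu hdist⟩

/-- **Gâteaux differentiability of the action integral.** If `L`
satisfies (S) and `u ∈ W^1L^Φ` with `d(u', L^∞) < Λ`, then for every `v ∈ W^1L^Φ` the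
map `s ↦ I(u + sv)` is finite for small `|s|` and differentiable at `s = 0` with
derivative `∫_0^T ∇ₓL⬝v + ∇_yL⬝v' dt`, and this expression is a bounded linear
functional of `v` on `W^1L^Φ`. -/
theorem statement14 {d : ℕ} (T : ℝ) (hT : 0 < T) (Φ : Ed d → ℝ) (hΦ : IsNInf Φ)
    (L : ℝ → Ed d → Ed d → ℝ) (lam Lam : ℝ) (hlam : 0 < lam) (hLam : 0 < Lam)
    (hLC : CaraL T L) (hLS : CondS T Φ L lam Lam)
    (u u' : ℝ → Ed d) (hu : MemW1Lphi T Φ u u') (hdist : distLinf T Φ u' < Lam) :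
    (∀ v v' : ℝ → Ed d, MemW1Lphi T Φ v v' →
      (∃ ε > (0:ℝ), ∀ s : ℝ, |s| < ε →
        IntegrableOn (fun t => L t (u t + s • v t) (u' t + s • v' t)) (Icc (0:ℝ) T)) ∧
      HasDerivAt (fun s : ℝ => ∫ t in Icc (0:ℝ) T, L t (u t + s • v t) (u' t + s • v' t))
        (∫ t in Icc (0:ℝ) T,
          (⟪gradient (fun x' => L t x' (u' t)) (u t), v t⟫ +
            ⟪gradient (fun y' => L t (u t) y') (u' t), v' t⟫)) 0) ∧
    ∃ C : ℝ, ∀ v v' : ℝ → Ed d, MemW1Lphi T Φ v v' →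
      |∫ t in Icc (0:ℝ) T,
          (⟪gradient (fun x' => L t x' (u' t)) (u t), v t⟫ +
            ⟪gradient (fun y' => L t (u t) y') (u' t), v' t⟫)| ≤
        C * (luxNorm T Φ v + luxNorm T Φ v') :=
  statement14_general T hT Φ hΦ L lam Lam hlam hLC hLS u u' hu hdist
end
end

section
/- Let d_1,…,d_k be positive integers, let Φ_j : ℝ^{d_j} → [0,∞) be N_∞ functions for j = 1,…,k, and let O_j : ℝ^d → ℝ^{d_j} be linear maps with ⋂_{j=1}^k ker O_j = {0}. Then Φ(y) := Σ_{j=1}^k Φ_j(O_j y) is an N_∞ function; in particular Φ(y)/|y| → +∞ as |y| → ∞. -/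
open MeasureTheory Filter Set
open scoped ENNReal RealInnerProductSpace Topology

noncomputable section

variable {d : ℕ}

/-!
Positivity of `Φ` away from `0` is exactly the kernel condition; the other pointwise properties
pass from the `Φ_j` to the sum. For superlinearity, a nonnegative `f` satisfies
`f y / ‖y‖ → ∞` iff `M ‖y‖ - C ≤ f y` for every slope `M` and some `C`, a form that adds up
over `j`. Since `y ↦ (O_j y)_j` is injective on a finite-dimensional space, it is antilipschitz,
so `‖y‖ ≤ K ∑_j ‖O_j y‖`, which turns the bounds for the `Φ_j` into one for `Φ`.
-/
theorem tendsto_div_norm_atTop_iff_forall_le_add {E : Type*} [SeminormedAddCommGroup E]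
    {f : E → ℝ} (hf : ∀ x, 0 ≤ f x) :
    Tendsto (fun x => f x / ‖x‖) (comap (‖·‖) atTop) atTop ↔
      ∀ M : ℝ, ∃ C, ∀ x, M * ‖x‖ ≤ f x + C := by
  constructor
  · intro h M
    obtain ⟨R, hR⟩ := eventually_atTop.1 <| eventually_comap.1 <|
      h.eventually (eventually_ge_atTop M)
    refine ⟨|M| * max R 1, fun x => ?_⟩
    rcases le_or_gt (max R 1) ‖x‖ with hx | hx
    · have hx₀ : 0 < ‖x‖ := lt_of_lt_of_le one_pos ((le_max_right R 1).trans hx)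
      have hMx := (le_div_iff₀ hx₀).1 (hR ‖x‖ ((le_max_left R 1).trans hx) x rfl)
      nlinarith [abs_nonneg M, le_max_right R 1]
    · nlinarith [le_abs_self M, abs_nonneg M, norm_nonneg x, hf x]
  · intro h
    refine tendsto_atTop.2 fun M => ?_
    obtain ⟨C, hC⟩ := h (M + 1)
    refine eventually_comap.2 <| (eventually_ge_atTop (max C 1)).mono fun r hr x hx => ?_
    subst hx
    have hx₀ : 0 < ‖x‖ := lt_of_lt_of_le one_pos ((le_max_right C 1).trans hr)
    rw [le_div_iff₀ hx₀]
    nlinarith [hC x, le_max_left C 1]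

theorem ConvexOn.fun_sum {𝕜 E β ι : Type*} [Semiring 𝕜] [PartialOrder 𝕜] [AddCommMonoid E]
    [AddCommMonoid β] [PartialOrder β] [IsOrderedAddMonoid β] [SMul 𝕜 E] [Module 𝕜 β]
    {s : Set E} (hs : Convex 𝕜 s) {t : Finset ι} {f : ι → E → β}
    (hf : ∀ i ∈ t, ConvexOn 𝕜 s (f i)) : ConvexOn 𝕜 s (fun x => ∑ i ∈ t, f i x) := by
  simpa only [← Finset.sum_apply] using
    Finset.sum_induction f (ConvexOn 𝕜 s) (fun _ _ => ConvexOn.add) (convexOn_const 0 hs) hf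

theorem exists_norm_le_mul_sum_norm {𝕜 ι E : Type*} [NontriviallyNormedField 𝕜] [CompleteSpace 𝕜]
    [Fintype ι] [NormedAddCommGroup E] [NormedSpace 𝕜 E] [FiniteDimensional 𝕜 E]
    {F : ι → Type*} [∀ j, NormedAddCommGroup (F j)] [∀ j, NormedSpace 𝕜 (F j)]
    (O : ∀ j, E →ₗ[𝕜] F j) (hO : ∀ y, (∀ j, O j y = 0) → y = 0) :
    ∃ K : ℝ, ∀ y, ‖y‖ ≤ K * ∑ j, ‖O j y‖ := by
  have hker : LinearMap.ker (LinearMap.pi O) = ⊥ :=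
    LinearMap.ker_eq_bot'.2 fun y hy => hO y fun j => congr_fun hy j
  obtain ⟨K, -, hK⟩ := (LinearMap.pi O).exists_antilipschitzWith hker
  refine ⟨K, fun y => (ZeroHomClass.bound_of_antilipschitz _ hK y).trans ?_⟩
  gcongr
  refine (pi_norm_le_iff_of_nonneg (by positivity)).2 fun j => ?_
  exact Finset.single_le_sum (f := fun j => ‖O j y‖) (fun _ _ => norm_nonneg _)
    (Finset.mem_univ j)

theorem forall_le_add_sum_comp {ι E : Type*} [Fintype ι] [SeminormedAddCommGroup E]
    {F : ι → Type*} [∀ j, SeminormedAddCommGroup (F j)] {f : ∀ j, F j → ℝ} {O : ∀ j, E → F j}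
    {K : ℝ} (hK : ∀ y, ‖y‖ ≤ K * ∑ j, ‖O j y‖) (hf : ∀ j M, ∃ C, ∀ z, M * ‖z‖ ≤ f j z + C) :
    ∀ M : ℝ, ∃ C, ∀ y, M * ‖y‖ ≤ ∑ j, f j (O j y) + C := by
  intro M
  choose C hC using fun j => hf j (|M| * K)
  refine ⟨∑ j, C j, fun y => ?_⟩
  calc M * ‖y‖ ≤ |M| * ‖y‖ := by gcongr; exact le_abs_self M
    _ ≤ |M| * (K * ∑ j, ‖O j y‖) := by gcongr; exact hK y
    _ = ∑ j, |M| * K * ‖O j y‖ := by rw [Finset.mul_sum, Finset.mul_sum]; simp only [mul_assoc]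
    _ ≤ ∑ j, (f j (O j y) + C j) := by gcongr with j; exact hC j _
    _ = ∑ j, f j (O j y) + ∑ j, C j := Finset.sum_add_distrib

theorem statement17_general (d k : ℕ) (dv : Fin k → ℕ)
    (Φs : ∀ j : Fin k, Ed (dv j) → ℝ) (hΦs : ∀ j, IsNInf (Φs j))
    (O : ∀ j : Fin k, Ed d →ₗ[ℝ] Ed (dv j))
    (hker : ∀ y : Ed d, (∀ j, O j y = 0) → y = 0) :
    IsNInf (fun y : Ed d => ∑ j, Φs j (O j y)) := by
  choose hdiff hconv hnonneg hzero hpos heven hsuper using hΦs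
  have hsum_nonneg : ∀ y, 0 ≤ ∑ j, Φs j (O j y) := fun y =>
    Finset.sum_nonneg fun j _ => hnonneg j _
  refine ⟨?_, ?_, hsum_nonneg, ?_, fun y hy => ?_, fun y => ?_, ?_⟩
  · exact Differentiable.fun_sum fun j _ =>
      (hdiff j).comp (O j).toContinuousLinearMap.differentiable
  · exact ConvexOn.fun_sum convex_univ fun j _ => (hconv j).comp_linearMap (O j)
  · simp only [map_zero, hzero, Finset.sum_const_zero]
  · obtain ⟨j, hj⟩ : ∃ j, O j y ≠ 0 := by
      by_contra! h
      exact hy (hker y h)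
    exact Finset.sum_pos' (fun j _ => hnonneg j _) ⟨j, Finset.mem_univ j, hpos j _ hj⟩
  · simp only [map_neg, heven]
  · obtain ⟨K, hK⟩ := exists_norm_le_mul_sum_norm O hker
    have hlower j := (tendsto_div_norm_atTop_iff_forall_le_add (hnonneg j)).1 (hsuper j)
    exact (tendsto_div_norm_atTop_iff_forall_le_add hsum_nonneg).2 <|
      forall_le_add_sum_comp hK hlower

/-- If `Φ_j : ℝ^{d_j} → [0,∞)` are `N_∞` functions and
`O_j : ℝ^d → ℝ^{d_j}` are linear maps with `⋂_j ker O_j = {0}`, then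
`Φ(y) = Σ_j Φ_j(O_j y)` is an `N_∞` function; in particular `Φ(y)/|y| → ∞`. -/
theorem statement17 (d k : ℕ) (dv : Fin k → ℕ) (hdv : ∀ j, 0 < dv j)
    (Φs : ∀ j : Fin k, Ed (dv j) → ℝ) (hΦs : ∀ j, IsNInf (Φs j))
    (O : ∀ j : Fin k, Ed d →ₗ[ℝ] Ed (dv j))
    (hker : ∀ y : Ed d, (∀ j, O j y = 0) → y = 0) :
    IsNInf (fun y : Ed d => ∑ j, Φs j (O j y)) :=
  statement17_general d k dv Φs hΦs O hker
end
end
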